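/- If V_ℓ ≤ c₂ 2^{-βℓ} and s_ℓ ≤ c₃ 2^{γ̂ℓ} with β > γ̂ > 0, then the MLMC cost S = 2ε^{-2}(Σ_{ℓ=0}^L √(V_ℓ s_ℓ))² is bounded by c₄ ε^{-2} where c₄ = 2 c₂ c₃ (1 - 2^{-(β-γ̂)/2})^{-2}, uniformly in L. -/
import Mathlib


open Finset

/-- MLMC complexity, case β > γhat: if V_ℓ ≤ c₂ 2^{-βℓ} and s_ℓ ≤ c₃ 2^{γhatℓ}
with β > γhat > 0, then S = 2ε⁻²(Σ_{ℓ=0}^L √(V_ℓ s_ℓ))² ≤ c₄ ε⁻² with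
c₄ = 2 c₂ c₃ (1 - 2^{-(β-γhat)/2})⁻², uniformly in L. -/
theorem mlmc_cost_case_beta_gt (c₂ c₃ β γhat ε : ℝ)
    (hc₂ : 0 < c₂) (hc₃ : 0 < c₃) (hγhat : 0 < γhat) (hβγ : γhat < β) (hε : 0 < ε)
    (L : ℕ) (V s : ℕ → ℝ)
    (hV0 : ∀ ℓ ≤ L, 0 ≤ V ℓ) (hs0 : ∀ ℓ ≤ L, 0 ≤ s ℓ)
    (hV : ∀ ℓ ≤ L, V ℓ ≤ c₂ * (2 : ℝ) ^ (-(β * ℓ)))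
    (hs : ∀ ℓ ≤ L, s ℓ ≤ c₃ * (2 : ℝ) ^ (γhat * ℓ)) :
    2 * ε⁻¹ ^ 2 * (∑ ℓ ∈ range (L + 1), Real.sqrt (V ℓ * s ℓ)) ^ 2 ≤
      (2 * c₂ * c₃ * ((1 - (2 : ℝ) ^ (-((β - γhat) / 2)))⁻¹) ^ 2) * ε⁻¹ ^ 2 := by
  set r : ℝ := (2 : ℝ) ^ (-((β - γhat) / 2)) with hr
  have hr0 : 0 < r := Real.rpow_pos_of_pos two_pos _
  have hr1 : r < 1 := by
    rw [hr]
    apply Real.rpow_lt_one_of_one_lt_of_neg one_lt_two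
    linarith
  have hsub : 0 < 1 - r := by linarith
  -- pointwise bound
  have key : ∀ ℓ ∈ range (L + 1),
      Real.sqrt (V ℓ * s ℓ) ≤ Real.sqrt (c₂ * c₃) * r ^ ℓ := by
    intro ℓ hℓ
    rw [mem_range, Nat.lt_succ_iff] at hℓ
    have h1 : V ℓ * s ℓ ≤ (c₂ * (2 : ℝ) ^ (-(β * ℓ))) * (c₃ * (2 : ℝ) ^ (γhat * ℓ)) :=
      mul_le_mul (hV ℓ hℓ) (hs ℓ hℓ) (hs0 ℓ hℓ)
        (le_of_lt (mul_pos hc₂ (Real.rpow_pos_of_pos two_pos _)))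
    have hpow : (r ^ ℓ) ^ 2 = (2:ℝ) ^ ((-(β * ℓ)) + γhat * ℓ) := by
      rw [hr, ← Real.rpow_natCast ((2:ℝ) ^ (-((β - γhat) / 2))) ℓ,
        ← Real.rpow_natCast _ 2, ← Real.rpow_mul (by positivity),
        ← Real.rpow_mul (by positivity)]
      congr 1
      push_cast
      ring
    have h2 : (c₂ * (2 : ℝ) ^ (-(β * ℓ))) * (c₃ * (2 : ℝ) ^ (γhat * ℓ))
        = (c₂ * c₃) * (r ^ ℓ) ^ 2 := by
      rw [hpow, Real.rpow_add two_pos]; ring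
    calc Real.sqrt (V ℓ * s ℓ) ≤ Real.sqrt ((c₂ * c₃) * (r ^ ℓ) ^ 2) := by
          exact Real.sqrt_le_sqrt (h1.trans_eq h2)
      _ = Real.sqrt (c₂ * c₃) * r ^ ℓ := by
          rw [Real.sqrt_mul (by positivity), Real.sqrt_sq (by positivity)]
  have hsum : (∑ ℓ ∈ range (L + 1), Real.sqrt (V ℓ * s ℓ))
      ≤ Real.sqrt (c₂ * c₃) * (1 - r)⁻¹ := by
    calc (∑ ℓ ∈ range (L + 1), Real.sqrt (V ℓ * s ℓ))
        ≤ ∑ ℓ ∈ range (L + 1), Real.sqrt (c₂ * c₃) * r ^ ℓ := sum_le_sum key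
      _ = Real.sqrt (c₂ * c₃) * ∑ ℓ ∈ range (L + 1), r ^ ℓ := by
          rw [mul_sum]
      _ ≤ Real.sqrt (c₂ * c₃) * (1 - r)⁻¹ := by
          apply mul_le_mul_of_nonneg_left _ (Real.sqrt_nonneg _)
          have hgeo := hasSum_geometric_of_lt_one hr0.le hr1
          exact (Summable.sum_le_tsum (range (L+1)) (fun i _ => by positivity)
            hgeo.summable).trans_eq hgeo.tsum_eq
  have hnn : 0 ≤ ∑ ℓ ∈ range (L + 1), Real.sqrt (V ℓ * s ℓ) :=
    sum_nonneg fun i _ => Real.sqrt_nonneg _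
  have hsq : (∑ ℓ ∈ range (L + 1), Real.sqrt (V ℓ * s ℓ)) ^ 2
      ≤ c₂ * c₃ * ((1 - r)⁻¹) ^ 2 := by
    calc (∑ ℓ ∈ range (L + 1), Real.sqrt (V ℓ * s ℓ)) ^ 2
        ≤ (Real.sqrt (c₂ * c₃) * (1 - r)⁻¹) ^ 2 := by
          apply pow_le_pow_left₀ hnn hsum
      _ = c₂ * c₃ * ((1 - r)⁻¹) ^ 2 := by
          rw [mul_pow, Real.sq_sqrt (by positivity)]
  have hε2 : (0:ℝ) ≤ ε⁻¹ ^ 2 := by positivity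
  nlinarith [hsq, hε2, mul_le_mul_of_nonneg_left hsq (by positivity : (0:ℝ) ≤ 2 * ε⁻¹ ^ 2)]
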